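/- Let 𝒢 be a family of connected non-trivial graphs on a common vertex set V. Let ℋ be a family of graphs on a common vertex set V'₁ with |V'₁| ≥ 7 such that every H ∈ ℋ is a path graph, or a cycle graph, or has diameter D(H) ≥ 6, or has girth g(H) ≥ 5 and minimum degree δ(H) ≥ 3. Let ℋ' be a family of graphs on a common vertex set V'₂ with |V'₂| ≥ 7, disjoint from V'₁, satisfying the same conditions. Then Sd_A(𝒢⊙(ℋ+ℋ')) = |V| · Sd_A(ℋ) + |V| · Sd_A(ℋ'). -/

import Mathlib

open SimpleGraph

/-- `S` is a metric generator for `G`: every pair of distinct vertices is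
distinguished by some element of `S` via the shortest-path distance. -/
def IsMetricGen {V : Type*} (G : SimpleGraph V) (S : Set V) : Prop :=
  ∀ u v : V, u ≠ v → ∃ s ∈ S, G.dist s u ≠ G.dist s v

/-- `S` is an adjacency generator for `G`. -/
def IsAdjGen {V : Type*} (G : SimpleGraph V) (S : Set V) : Prop :=
  ∀ x y : V, x ∉ S → y ∉ S → x ≠ y → ∃ s ∈ S, Xor' (G.Adj s x) (G.Adj s y)

/-- `S` is a simultaneous metric generator for the family `𝒢`. -/
def IsSimMetricGen {V : Type*} (𝒢 : Set (SimpleGraph V)) (S : Set V) : Prop :=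
  ∀ G ∈ 𝒢, IsMetricGen G S

/-- `S` is a simultaneous adjacency generator for the family `ℋ`. -/
def IsSimAdjGen {V : Type*} (ℋ : Set (SimpleGraph V)) (S : Set V) : Prop :=
  ∀ H ∈ ℋ, IsAdjGen H S

/-- The simultaneous metric dimension of a family of graphs. -/
noncomputable def Sd {V : Type*} (𝒢 : Set (SimpleGraph V)) : ℕ :=
  sInf {n | ∃ S : Set V, S.ncard = n ∧ IsSimMetricGen 𝒢 S}

/-- The simultaneous adjacency dimension of a family of graphs. -/
noncomputable def SdA {V : Type*} (ℋ : Set (SimpleGraph V)) : ℕ :=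
  sInf {n | ∃ S : Set V, S.ncard = n ∧ IsSimAdjGen ℋ S}

/-- The adjacency dimension of a graph. -/
noncomputable def adjDim {V : Type*} (G : SimpleGraph V) : ℕ := SdA {G}

/-- `B` is an adjacency basis of `G`. -/
def IsAdjBasis {V : Type*} (G : SimpleGraph V) (B : Set V) : Prop :=
  IsAdjGen G B ∧ B.ncard = adjDim G

/-- `B` is a simultaneous adjacency basis of the family `ℋ`. -/
def IsSimAdjBasis {V : Type*} (ℋ : Set (SimpleGraph V)) (B : Set V) : Prop :=
  IsSimAdjGen ℋ B ∧ B.ncard = SdA ℋ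

/-- `D` is a dominating set of `G`. -/
def IsDomSet {V : Type*} (G : SimpleGraph V) (D : Set V) : Prop :=
  ∀ v ∉ D, ∃ u ∈ D, G.Adj u v

/-- `D` is a simultaneous dominating set of the family `𝒢`. -/
def IsSimDomSet {V : Type*} (𝒢 : Set (SimpleGraph V)) (D : Set V) : Prop :=
  ∀ G ∈ 𝒢, IsDomSet G D

/-- The simultaneous domination number of a family of graphs. -/
noncomputable def Sgamma {V : Type*} (𝒢 : Set (SimpleGraph V)) : ℕ :=
  sInf {n | ∃ D : Set V, D.ncard = n ∧ IsSimDomSet 𝒢 D}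

/-- The domination number of a graph. -/
noncomputable def domNum {V : Type*} (G : SimpleGraph V) : ℕ := Sgamma {G}

/-- `γ'(G) = min over vertices `v` of `γ(G - v)`. -/
noncomputable def gammaPrime {V : Type*} (G : SimpleGraph V) : ℕ :=
  sInf {n | ∃ v : V, n = domNum (G.induce {v}ᶜ)}

/-- The corona product `G ⊙ H`: one copy of `G` together with a copy of `H`
for each vertex `i` of `G`, joining `i` to every vertex of its copy. -/
def corona {V V' : Type*} (G : SimpleGraph V) (H : SimpleGraph V') :
    SimpleGraph (V ⊕ V × V') where
  Adj x y :=
    match x, y with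
    | Sum.inl i, Sum.inl j => G.Adj i j
    | Sum.inl i, Sum.inr p => i = p.1
    | Sum.inr p, Sum.inl j => p.1 = j
    | Sum.inr p, Sum.inr q => p.1 = q.1 ∧ H.Adj p.2 q.2
  symm := by
    constructor
    rintro (i | p) (j | q) h
    · exact G.adj_symm h
    · exact h.symm
    · exact h.symm
    · exact ⟨h.1.symm, H.adj_symm h.2⟩
  loopless := by
    constructor
    rintro (i | p) h
    · exact G.irrefl h
    · exact H.irrefl h.2

/-- The family `{G ⊙ H : G ∈ 𝒢, H ∈ ℋ}` of corona products. -/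
def coronaFam {V V' : Type*} (𝒢 : Set (SimpleGraph V)) (ℋ : Set (SimpleGraph V')) :
    Set (SimpleGraph (V ⊕ V × V')) :=
  {K | ∃ G ∈ 𝒢, ∃ H ∈ ℋ, K = corona G H}

/-- The join `G + H` of two (vertex-disjoint) graphs. -/
def joinG {V₁ V₂ : Type*} (G : SimpleGraph V₁) (H : SimpleGraph V₂) :
    SimpleGraph (V₁ ⊕ V₂) where
  Adj x y :=
    match x, y with
    | Sum.inl a, Sum.inl b => G.Adj a b
    | Sum.inl _, Sum.inr _ => True
    | Sum.inr _, Sum.inl _ => True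
    | Sum.inr a, Sum.inr b => H.Adj a b
  symm := by
    constructor
    rintro (a | a) (b | b) h
    · exact G.adj_symm h
    · trivial
    · trivial
    · exact H.adj_symm h
  loopless := by
    constructor
    rintro (a | a) h
    · exact G.irrefl h
    · exact H.irrefl h

/-- The family `{G + H : G ∈ 𝒢, H ∈ ℋ}` of joins. -/
def joinFam {V₁ V₂ : Type*} (𝒢 : Set (SimpleGraph V₁)) (ℋ : Set (SimpleGraph V₂)) :
    Set (SimpleGraph (V₁ ⊕ V₂)) :=
  {K | ∃ G ∈ 𝒢, ∃ H ∈ ℋ, K = joinG G H}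

/-- The family `𝒢_B(G)`: all graphs `G'` such that, for some permutation `f` of the
vertex set fixing `B` pointwise, `N_{G'}(x) = f(N_G(x))` for every `x ∈ B`. -/
def GBfam {V : Type*} (G : SimpleGraph V) (B : Set V) : Set (SimpleGraph V) :=
  {G' | ∃ f : Equiv.Perm V, (∀ x ∈ B, f x = x) ∧
    ∀ x ∈ B, G'.neighborSet x = f '' (G.neighborSet x)}

/-!
A simultaneous adjacency generator of `𝒢 ⊙ (ℋ + ℋ')` restricts, in each of the `|V|` copies of
the join, to a simultaneous adjacency generator of `ℋ + ℋ'`, which in turn splits into simultaneous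
adjacency generators of `ℋ` and `ℋ'`; this gives `≥`. For `≤`, put simultaneous adjacency bases
`B₁ ∪ B₂` into every copy. Since `|V'ᵢ| ≥ 7` forces `|Bᵢ| ≥ 3`, the structural hypotheses on the
graphs of `ℋ` and `ℋ'` (degree at most two, large diameter, or no `C₃`, `C₄` with minimum degree
three) ensure that no vertex is adjacent to all of `Bᵢ`. That is exactly what is needed to tell a
vertex of `G` from a vertex of its own copy, and a vertex of `V'₁` from one of `V'₂` in the join.
-/

namespace SimpleGraph

variable {α : Type*} {G : SimpleGraph α}

lemma commonNeighbors_eq_empty_of_four_le_egirth (hg : 4 ≤ G.egirth) {a b : α}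
    (hab : G.Adj a b) : G.commonNeighbors a b = ∅ := by
  refine Set.eq_empty_of_forall_notMem fun c hc => ?_
  rw [mem_commonNeighbors] at hc
  have hcyc : (Walk.cons hab (Walk.cons hc.2 (Walk.cons hc.1.symm Walk.nil))).IsCycle := by
    simp [Walk.cons_isCycle_iff, hab.ne, hab.ne', hc.1.ne, hc.2.ne, hc.1.ne']
  have := hg.trans (egirth_le_length hcyc)
  norm_num at this

lemma commonNeighbors_subsingleton_of_five_le_egirth (hg : 5 ≤ G.egirth) {a c : α}
    (hac : a ≠ c) : (G.commonNeighbors a c).Subsingleton := by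
  intro b hb d hd
  by_contra hbd
  rw [mem_commonNeighbors] at hb hd
  have hcyc : (Walk.cons hb.1 (Walk.cons hb.2.symm
      (Walk.cons hd.2 (Walk.cons hd.1.symm Walk.nil)))).IsCycle := by
    simp [Walk.cons_isCycle_iff, hac, hbd, hb.1.ne, hd.1.ne, hd.2.ne, hb.1.ne', hb.2.ne',
      hd.1.ne', Ne.symm hac]
  have := hg.trans (egirth_le_length hcyc)
  norm_num at this

lemma Iso.ncard_neighborSet {β : Type*} {G' : SimpleGraph β} (φ : G ≃g G') (v : α) :
    (G.neighborSet v).ncard = (G'.neighborSet (φ v)).ncard := by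
  rw [← Nat.card_coe_set_eq, ← Nat.card_coe_set_eq]
  exact Nat.card_congr (φ.mapNeighborSet v)

lemma ncard_neighborSet_cycleGraph_le_two : ∀ {n : ℕ} (v : Fin n),
    ((cycleGraph n).neighborSet v).ncard ≤ 2
  | 0, v => v.elim0
  | 1, v => by simp [neighborSet, cycleGraph_one_adj]
  | _ + 2, v => by
    rw [cycleGraph_neighborSet]
    exact (Set.ncard_insert_le _ _).trans (by simp)

lemma ncard_neighborSet_pathGraph_le_two {n : ℕ} (v : Fin n) :
    ((pathGraph n).neighborSet v).ncard ≤ 2 :=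
  (Set.ncard_le_ncard fun _ h => pathGraph_le_cycleGraph h).trans
    (ncard_neighborSet_cycleGraph_le_two v)

lemma exists_not_adj_of_ncard_neighborSet_lt [Finite α] {B : Set α} {w : α}
    (h : (G.neighborSet w).ncard < B.ncard) : ∃ b ∈ B, ¬ G.Adj b w := by
  by_contra! hw
  exact h.not_ge (Set.ncard_le_ncard fun b hb => (hw b hb).symm)

end SimpleGraph

section AdjGen

variable {α : Type*} {H : SimpleGraph α} {B : Set α}

lemma IsAdjGen.card_le_ncard_add_two_pow [Finite α] (hB : IsAdjGen H B) :
    Nat.card α ≤ B.ncard + 2 ^ B.ncard := by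
  classical
  have hinj : Function.Injective fun (x : ↥Bᶜ) (b : B) => decide (H.Adj b x) := by
    intro x y hxy
    by_contra hne
    obtain ⟨s, hs, hxor⟩ := hB x y x.2 y.2 fun h => hne (Subtype.ext h)
    have := congrFun hxy ⟨s, hs⟩
    simp only [decide_eq_decide] at this
    rcases hxor with ⟨h, h'⟩ | ⟨h, h'⟩
    · exact h' (this.1 h)
    · exact h' (this.2 h)
  have hcompl := Nat.card_le_card_of_injective _ hinj
  rw [Nat.card_fun, Nat.card_eq_fintype_card (α := Bool), Fintype.card_bool,
    Nat.card_coe_set_eq, Nat.card_coe_set_eq] at hcompl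
  rw [← Set.ncard_add_ncard_compl B]
  omega

lemma IsAdjGen.three_le_ncard [Finite α] (h7 : 7 ≤ Nat.card α) (hB : IsAdjGen H B) :
    3 ≤ B.ncard := by
  have := hB.card_le_ncard_add_two_pow
  by_contra! h
  interval_cases B.ncard <;> omega

lemma edist_le_two_of_forall_adj {w b v : α} (hw : ∀ b ∈ B, H.Adj b w) (hb : b ∈ B)
    (hbv : H.Adj b v ∨ b = v) : H.edist w v ≤ 2 :=
  calc H.edist w v ≤ H.edist w b + H.edist b v := SimpleGraph.edist_triangle
    _ ≤ 1 + 1 := add_le_add (edist_le_one_iff_adj_or_eq.2 (.inl (hw b hb).symm))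
        (edist_le_one_iff_adj_or_eq.2 hbv)
    _ = 2 := rfl

lemma IsAdjGen.eq_of_two_lt_edist {w x y : α} (hB : IsAdjGen H B) (hw : ∀ b ∈ B, H.Adj b w)
    (hx : 2 < H.edist w x) (hy : 2 < H.edist w y) : x = y := by
  by_contra hxy
  obtain ⟨s, hs, hxor⟩ := hB x y
    (fun h => (edist_le_two_of_forall_adj hw h (.inr rfl)).not_gt hx)
    (fun h => (edist_le_two_of_forall_adj hw h (.inr rfl)).not_gt hy) hxy
  rcases hxor with ⟨h, -⟩ | ⟨h, -⟩
  · exact (edist_le_two_of_forall_adj hw hs (.inl h)).not_gt hx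
  · exact (edist_le_two_of_forall_adj hw hs (.inl h)).not_gt hy

lemma IsAdjGen.diam_le_five {w : α} (hB : IsAdjGen H B) (hw : ∀ b ∈ B, H.Adj b w) :
    H.diam ≤ 5 := by
  by_cases hconn : H.Preconnected
  swap
  · simp [diam_eq_zero_of_not_connected fun h => hconn h.preconnected]
  have hnear_le_five : ∀ u v, H.edist w v ≤ 2 → H.edist u v ≤ 5 := by
    intro u v hv
    by_cases hu : H.edist w u ≤ 2
    · calc H.edist u v ≤ H.edist u w + H.edist w v := SimpleGraph.edist_triangle
        _ ≤ 2 + 2 := add_le_add (by rwa [SimpleGraph.edist_comm]) hv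
        _ ≤ 5 := by norm_num
    rw [not_le] at hu
    have : Nontrivial α := ⟨⟨u, v, by rintro rfl; exact hu.not_ge hv⟩⟩
    obtain ⟨z, hz⟩ := hconn.exists_adj_of_nontrivial u
    have hzw : H.edist z w ≤ 2 := by
      rw [SimpleGraph.edist_comm]
      by_contra! h
      exact hz.ne (hB.eq_of_two_lt_edist hw hu h)
    calc H.edist u v ≤ H.edist u z + H.edist z v := SimpleGraph.edist_triangle
      _ ≤ H.edist u z + (H.edist z w + H.edist w v) := by
          gcongr
          exact SimpleGraph.edist_triangle
      _ ≤ 1 + (2 + 2) := add_le_add (edist_le_one_iff_adj_or_eq.2 (.inl hz)) (add_le_add hzw hv)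
      _ = 5 := rfl
  refine ENat.toNat_le_of_le_natCast (ediam_le_of_edist_le fun u v => ?_)
  by_cases hv : H.edist w v ≤ 2
  · exact hnear_le_five u v hv
  by_cases hu : H.edist w u ≤ 2
  · rw [SimpleGraph.edist_comm]
    exact hnear_le_five v u hu
  rw [not_le] at hu hv
  simp [hB.eq_of_two_lt_edist hw hu hv]

lemma IsAdjGen.exists_not_adj_of_five_le_egirth (hB : IsAdjGen H B) (hg : 5 ≤ H.egirth)
    {b : α} (hb : b ∈ B) (hdeg : 3 ≤ (H.neighborSet b).ncard) (w : α) :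
    ∃ b ∈ B, ¬ H.Adj b w := by
  by_contra! hw
  have hfin : (H.neighborSet b).Finite := Set.finite_of_ncard_pos (by omega)
  obtain ⟨u₁, u₂, hu₁, hu₂, hu⟩ :=
      (Set.one_lt_ncard_iff (s := H.neighborSet b \ {w}) hfin.sdiff).1 <| by
        rw [Set.ncard_sdiff_singleton_of_mem (show w ∈ H.neighborSet b from hw b hb)]
        omega
  -- a neighbour of `b` in `B` would close a triangle with `w`
  have hnotB : ∀ u ∈ H.neighborSet b \ {w}, u ∉ B := fun u hu huB => by
    have := commonNeighbors_eq_empty_of_four_le_egirth ((by norm_num : (4 : ℕ∞) ≤ 5).trans hg)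
      (hw b hb)
    exact this.subset ⟨hu.1, (hw u huB).symm⟩
  obtain ⟨b', hb', hxor⟩ := hB u₁ u₂ (hnotB u₁ hu₁) (hnotB u₂ hu₂) hu
  have hbb' : b ≠ b' := by
    rintro rfl
    rcases hxor with ⟨-, h⟩ | ⟨-, h⟩
    exacts [h hu₂.1, h hu₁.1]
  -- a neighbour of both `b` and `b'` other than `w` would close a 4-cycle
  have hunique := commonNeighbors_subsingleton_of_five_le_egirth hg hbb'
  have hw' : w ∈ H.commonNeighbors b b' := ⟨hw b hb, hw b' hb'⟩
  rcases hxor with ⟨h, -⟩ | ⟨h, -⟩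
  · exact hu₁.2 (hunique ⟨hu₁.1, h⟩ hw')
  · exact hu₂.2 (hunique ⟨hu₂.1, h⟩ hw')

lemma IsAdjGen.exists_not_adj [Fintype α] (h7 : 7 ≤ Fintype.card α)
    (hH : Nonempty (H ≃g pathGraph (Fintype.card α)) ∨
      Nonempty (H ≃g cycleGraph (Fintype.card α)) ∨
      6 ≤ H.diam ∨ (5 ≤ H.egirth ∧ ∀ v : α, 3 ≤ (H.neighborSet v).ncard))
    (hB : IsAdjGen H B) (w : α) : ∃ b ∈ B, ¬ H.Adj b w := by
  have h3 := hB.three_le_ncard (by rwa [Nat.card_eq_fintype_card])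
  rcases hH with ⟨⟨φ⟩⟩ | ⟨⟨φ⟩⟩ | hdiam | ⟨hg, hdeg⟩
  · refine exists_not_adj_of_ncard_neighborSet_lt ?_
    rw [φ.ncard_neighborSet]
    exact (ncard_neighborSet_pathGraph_le_two _).trans_lt h3
  · refine exists_not_adj_of_ncard_neighborSet_lt ?_
    rw [φ.ncard_neighborSet]
    exact (ncard_neighborSet_cycleGraph_le_two _).trans_lt h3
  · by_contra! hw
    have := hB.diam_le_five hw
    omega
  · obtain ⟨b, hb⟩ := Set.nonempty_of_ncard_ne_zero (by omega : B.ncard ≠ 0)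
    exact hB.exists_not_adj_of_five_le_egirth hg hb (hdeg b) w

end AdjGen

section Products

variable {V W W₁ W₂ : Type*} {G : SimpleGraph V} {F : SimpleGraph W}
  {H₁ : SimpleGraph W₁} {H₂ : SimpleGraph W₂}

@[simp] lemma corona_adj_inl_inl {i j : V} :
    (corona G F).Adj (.inl i) (.inl j) ↔ G.Adj i j := Iff.rfl

@[simp] lemma corona_adj_inl_inr {i : V} {p : V × W} :
    (corona G F).Adj (.inl i) (.inr p) ↔ i = p.1 := Iff.rfl

@[simp] lemma corona_adj_inr_inl {j : V} {p : V × W} :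
    (corona G F).Adj (.inr p) (.inl j) ↔ p.1 = j := Iff.rfl

@[simp] lemma corona_adj_inr_inr {p q : V × W} :
    (corona G F).Adj (.inr p) (.inr q) ↔ p.1 = q.1 ∧ F.Adj p.2 q.2 := Iff.rfl

@[simp] lemma joinG_adj_inl_inl {a b : W₁} :
    (joinG H₁ H₂).Adj (.inl a) (.inl b) ↔ H₁.Adj a b := Iff.rfl

@[simp] lemma joinG_adj_inl_inr {a : W₁} {b : W₂} : (joinG H₁ H₂).Adj (.inl a) (.inr b) :=
  trivial

@[simp] lemma joinG_adj_inr_inl {a : W₁} {b : W₂} : (joinG H₁ H₂).Adj (.inr b) (.inl a) :=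
  trivial

@[simp] lemma joinG_adj_inr_inr {a b : W₂} :
    (joinG H₁ H₂).Adj (.inr a) (.inr b) ↔ H₂.Adj a b := Iff.rfl

lemma IsAdjGen.slice_of_corona {S : Set (V ⊕ V × W)} (hS : IsAdjGen (corona G F) S) (i : V) :
    IsAdjGen F {z | Sum.inr (i, z) ∈ S} := by
  intro z z' hz hz' hne
  obtain ⟨s | ⟨j, y⟩, hs, hxor⟩ := hS _ _ hz hz' (by simpa using hne)
  · simp [Xor'] at hxor
  · obtain rfl : j = i := by by_contra hji; simp [Xor', hji] at hxor
    exact ⟨y, hs, by simpa using hxor⟩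

lemma IsAdjGen.preimage_inl_of_joinG {B : Set (W₁ ⊕ W₂)} (hB : IsAdjGen (joinG H₁ H₂) B) :
    IsAdjGen H₁ (Sum.inl ⁻¹' B) := by
  intro z z' hz hz' hne
  obtain ⟨s | s, hs, hxor⟩ := hB _ _ hz hz' (by simpa using hne)
  · exact ⟨s, hs, by simpa using hxor⟩
  · simp [Xor'] at hxor

lemma IsAdjGen.preimage_inr_of_joinG {B : Set (W₁ ⊕ W₂)} (hB : IsAdjGen (joinG H₁ H₂) B) :
    IsAdjGen H₂ (Sum.inr ⁻¹' B) := by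
  intro z z' hz hz' hne
  obtain ⟨s | s, hs, hxor⟩ := hB _ _ hz hz' (by simpa using hne)
  · simp [Xor'] at hxor
  · exact ⟨s, hs, by simpa using hxor⟩

variable {B₁ : Set W₁} {B₂ : Set W₂}

lemma IsAdjGen.joinG (hB₁ : IsAdjGen H₁ B₁) (hB₂ : IsAdjGen H₂ B₂)
    (hP₁ : ∀ w, ∃ b ∈ B₁, ¬ H₁.Adj b w) :
    IsAdjGen (joinG H₁ H₂) (Sum.inl '' B₁ ∪ Sum.inr '' B₂) := by
  rintro (w | w) (w' | w') hw hw' hne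
  · obtain ⟨b, hb, hxor⟩ := hB₁ w w' (by simpa using hw) (by simpa using hw') (by simpa using hne)
    exact ⟨.inl b, by simpa using hb, by simpa using hxor⟩
  · obtain ⟨b, hb, hnadj⟩ := hP₁ w
    exact ⟨.inl b, by simpa using hb, .inr ⟨trivial, by simpa using hnadj⟩⟩
  · obtain ⟨b, hb, hnadj⟩ := hP₁ w'
    exact ⟨.inl b, by simpa using hb, .inl ⟨trivial, by simpa using hnadj⟩⟩
  · obtain ⟨b, hb, hxor⟩ := hB₂ w w' (by simpa using hw) (by simpa using hw') (by simpa using hne)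
    exact ⟨.inr b, by simpa using hb, by simpa using hxor⟩

lemma joinG_exists_not_adj (hP₁ : ∀ w, ∃ b ∈ B₁, ¬ H₁.Adj b w)
    (hP₂ : ∀ w, ∃ b ∈ B₂, ¬ H₂.Adj b w) (z : W₁ ⊕ W₂) :
    ∃ b ∈ Sum.inl '' B₁ ∪ Sum.inr '' B₂, ¬ (joinG H₁ H₂).Adj b z := by
  rcases z with w | w
  · obtain ⟨b, hb, hnadj⟩ := hP₁ w
    exact ⟨.inl b, by simpa using hb, by simpa using hnadj⟩
  · obtain ⟨b, hb, hnadj⟩ := hP₂ w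
    exact ⟨.inr b, by simpa using hb, by simpa using hnadj⟩

lemma isDomSet_joinG (h₁ : B₁.Nonempty) (h₂ : B₂.Nonempty) :
    IsDomSet (joinG H₁ H₂) (Sum.inl '' B₁ ∪ Sum.inr '' B₂) := by
  rintro (w | w) -
  · obtain ⟨b, hb⟩ := h₂
    exact ⟨.inr b, by simpa using hb, trivial⟩
  · obtain ⟨b, hb⟩ := h₁
    exact ⟨.inl b, by simpa using hb, trivial⟩

lemma IsAdjGen.corona_univ_prod {B : Set W} (hB : IsAdjGen F B) (hdom : IsDomSet F B)
    (hP : ∀ w, ∃ b ∈ B, ¬ F.Adj b w) (hne : B.Nonempty) :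
    IsAdjGen (corona G F) (Sum.inr '' (Set.univ ×ˢ B)) := by
  obtain ⟨b₀, hb₀⟩ := hne
  have hmem : ∀ i b, b ∈ B → (Sum.inr (i, b) : V ⊕ V × W) ∈ Sum.inr '' (Set.univ ×ˢ B) :=
    fun i b hb => ⟨(i, b), ⟨trivial, hb⟩, rfl⟩
  -- a vertex of `G` is told apart from a vertex of its own copy by a non-neighbour in `B`
  have hinl_inr : ∀ i j z, z ∉ B → ∃ s ∈ Sum.inr '' (Set.univ ×ˢ B),
      Xor ((corona G F).Adj s (.inl i)) ((corona G F).Adj s (.inr (j, z))) := by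
    intro i j z hz
    by_cases hij : i = j
    · subst hij
      obtain ⟨b, hb, hnadj⟩ := hP z
      exact ⟨_, hmem i b hb, .inl ⟨rfl, by simpa using hnadj⟩⟩
    · exact ⟨_, hmem i b₀ hb₀, .inl ⟨rfl, by simp [hij]⟩⟩
  rintro (i | ⟨i, z⟩) (j | ⟨j, z'⟩) hx hy hne
  · exact ⟨_, hmem i b₀ hb₀, .inl ⟨rfl, by simpa using hne⟩⟩
  · exact hinl_inr i j z' (by simpa using hy)
  · obtain ⟨s, hs, hxor⟩ := hinl_inr j i z (by simpa using hx)
    exact ⟨s, hs, hxor.symm⟩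
  · have hz : z ∉ B := by simpa using hx
    by_cases hij : i = j
    · subst hij
      obtain ⟨b, hb, hxor⟩ := hB z z' hz (by simpa using hy) (by simpa using hne)
      exact ⟨_, hmem i b hb, by simpa using hxor⟩
    · obtain ⟨b, hb, hadj⟩ := hdom z hz
      exact ⟨_, hmem i b hb, .inl ⟨⟨rfl, hadj⟩, by simp [hij]⟩⟩

end Products

lemma Set.ncard_eq_ncard_preimage_inl_add {α β : Type*} [Finite α] [Finite β]
    (s : Set (α ⊕ β)) : s.ncard = (Sum.inl ⁻¹' s).ncard + (Sum.inr ⁻¹' s).ncard := by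
  simp only [← Nat.card_coe_set_eq]
  exact (Nat.card_congr Equiv.subtypeSum).trans Nat.card_sum

lemma Set.ncard_eq_sum_ncard_slices {α β : Type*} [Fintype α] [Finite β] (s : Set (α × β)) :
    s.ncard = ∑ a, {b | (a, b) ∈ s}.ncard := by
  simp only [← Nat.card_coe_set_eq]
  exact (Nat.card_congr (Equiv.subtypeProdEquivSigmaSubtype fun a b => (a, b) ∈ s)).trans
    Nat.card_sigma

section SimultaneousAdjacencyDimension

variable {V W W₁ W₂ : Type*}

lemma SdA_le_ncard {ℋ : Set (SimpleGraph V)} {S : Set V} (hS : IsSimAdjGen ℋ S) :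
    SdA ℋ ≤ S.ncard :=
  Nat.sInf_le ⟨S, rfl, hS⟩

lemma exists_isSimAdjBasis (ℋ : Set (SimpleGraph V)) : ∃ B, IsSimAdjBasis ℋ B := by
  obtain ⟨B, hcard, hB⟩ : SdA ℋ ∈ {n | ∃ S : Set V, S.ncard = n ∧ IsSimAdjGen ℋ S} :=
    Nat.sInf_mem ⟨_, Set.univ, rfl, fun _ _ x _ hx => absurd (Set.mem_univ x) hx⟩
  exact ⟨B, hB, hcard⟩

lemma card_mul_SdA_le_SdA_coronaFam [Fintype V] [Finite W] {𝒢 : Set (SimpleGraph V)}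
    (h𝒢 : 𝒢.Nonempty) (ℱ : Set (SimpleGraph W)) :
    Fintype.card V * SdA ℱ ≤ SdA (coronaFam 𝒢 ℱ) := by
  obtain ⟨G, hG⟩ := h𝒢
  obtain ⟨S, hS, hcard⟩ := exists_isSimAdjBasis (coronaFam 𝒢 ℱ)
  have hslice : ∀ i, SdA ℱ ≤ {z | Sum.inr (i, z) ∈ S}.ncard := fun i =>
    SdA_le_ncard fun F hF => (hS _ ⟨G, hG, F, hF, rfl⟩).slice_of_corona i
  calc Fintype.card V * SdA ℱ = ∑ _i : V, SdA ℱ := by simp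
    _ ≤ ∑ i, {z | Sum.inr (i, z) ∈ S}.ncard := Finset.sum_le_sum fun i _ => hslice i
    _ = (Sum.inr ⁻¹' S).ncard := (Set.ncard_eq_sum_ncard_slices (Sum.inr ⁻¹' S)).symm
    _ ≤ S.ncard := by
      rw [Set.ncard_eq_ncard_preimage_inl_add S]
      exact Nat.le_add_left _ _
    _ = SdA (coronaFam 𝒢 ℱ) := hcard

lemma SdA_add_SdA_le_SdA_joinFam [Finite W₁] [Finite W₂] {ℋ₁ : Set (SimpleGraph W₁)}
    {ℋ₂ : Set (SimpleGraph W₂)} (hℋ₁ : ℋ₁.Nonempty) (hℋ₂ : ℋ₂.Nonempty) :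
    SdA ℋ₁ + SdA ℋ₂ ≤ SdA (joinFam ℋ₁ ℋ₂) := by
  obtain ⟨H₁, hH₁⟩ := hℋ₁
  obtain ⟨H₂, hH₂⟩ := hℋ₂
  obtain ⟨B, hB, hcard⟩ := exists_isSimAdjBasis (joinFam ℋ₁ ℋ₂)
  rw [← hcard, Set.ncard_eq_ncard_preimage_inl_add B]
  exact add_le_add
    (SdA_le_ncard fun H hH => (hB _ ⟨H, hH, H₂, hH₂, rfl⟩).preimage_inl_of_joinG)
    (SdA_le_ncard fun H hH => (hB _ ⟨H₁, hH₁, H, hH, rfl⟩).preimage_inr_of_joinG)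

lemma SdA_coronaFam_le [Fintype V] [Finite W] (𝒢 : Set (SimpleGraph V))
    {ℱ : Set (SimpleGraph W)} {B : Set W} (hB : IsSimAdjGen ℱ B) (hdom : ∀ F ∈ ℱ, IsDomSet F B)
    (hP : ∀ F ∈ ℱ, ∀ w, ∃ b ∈ B, ¬ F.Adj b w) (hne : B.Nonempty) :
    SdA (coronaFam 𝒢 ℱ) ≤ Fintype.card V * B.ncard := by
  refine (SdA_le_ncard (S := Sum.inr '' (Set.univ ×ˢ B)) ?_).trans_eq ?_
  · rintro _ ⟨G, -, F, hF, rfl⟩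
    exact (hB F hF).corona_univ_prod (hdom F hF) (hP F hF) hne
  · rw [Set.ncard_image_of_injective _ Sum.inr_injective, Set.ncard_prod, Set.ncard_univ,
      Nat.card_eq_fintype_card]

lemma SdA_coronaFam_joinFam_le [Fintype V] [Finite W₁] [Finite W₂] (𝒢 : Set (SimpleGraph V))
    {ℋ₁ : Set (SimpleGraph W₁)} {ℋ₂ : Set (SimpleGraph W₂)} {B₁ : Set W₁} {B₂ : Set W₂}
    (hB₁ : IsSimAdjGen ℋ₁ B₁) (hB₂ : IsSimAdjGen ℋ₂ B₂)
    (hP₁ : ∀ H ∈ ℋ₁, ∀ w, ∃ b ∈ B₁, ¬ H.Adj b w) (hP₂ : ∀ H ∈ ℋ₂, ∀ w, ∃ b ∈ B₂, ¬ H.Adj b w)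
    (hne₁ : B₁.Nonempty) (hne₂ : B₂.Nonempty) :
    SdA (coronaFam 𝒢 (joinFam ℋ₁ ℋ₂)) ≤ Fintype.card V * (B₁.ncard + B₂.ncard) := by
  have hcard : (Sum.inl '' B₁ ∪ Sum.inr '' B₂).ncard = B₁.ncard + B₂.ncard := by
    rw [Set.ncard_eq_ncard_preimage_inl_add]
    simp [Set.preimage_image_eq _ Sum.inl_injective, Set.preimage_image_eq _ Sum.inr_injective]
  rw [← hcard]
  refine SdA_coronaFam_le 𝒢 ?_ ?_ ?_ (hne₁.image _ |>.inl)
  · rintro _ ⟨H₁, hH₁, H₂, hH₂, rfl⟩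
    exact (hB₁ H₁ hH₁).joinG (hB₂ H₂ hH₂) (hP₁ H₁ hH₁)
  · rintro _ ⟨H₁, -, H₂, -, rfl⟩
    exact isDomSet_joinG hne₁ hne₂
  · rintro _ ⟨H₁, hH₁, H₂, hH₂, rfl⟩
    exact joinG_exists_not_adj (hP₁ H₁ hH₁) (hP₂ H₂ hH₂)

end SimultaneousAdjacencyDimension

theorem statement_15_general {V V₁ V₂ : Type*} [Fintype V] [Fintype V₁] [Fintype V₂]
    (𝒢 : Set (SimpleGraph V)) (h𝒢ne : 𝒢.Nonempty)
    (hV₁ : 7 ≤ Fintype.card V₁) (hV₂ : 7 ≤ Fintype.card V₂)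
    (ℋ : Set (SimpleGraph V₁)) (hℋne : ℋ.Nonempty)
    (ℋ' : Set (SimpleGraph V₂)) (hℋ'ne : ℋ'.Nonempty)
    (hcond : ∀ H ∈ ℋ, Nonempty (H ≃g SimpleGraph.pathGraph (Fintype.card V₁)) ∨
      Nonempty (H ≃g SimpleGraph.cycleGraph (Fintype.card V₁)) ∨
      6 ≤ H.diam ∨ (5 ≤ H.egirth ∧ ∀ v : V₁, 3 ≤ (H.neighborSet v).ncard))
    (hcond' : ∀ H' ∈ ℋ', Nonempty (H' ≃g SimpleGraph.pathGraph (Fintype.card V₂)) ∨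
      Nonempty (H' ≃g SimpleGraph.cycleGraph (Fintype.card V₂)) ∨
      6 ≤ H'.diam ∨ (5 ≤ H'.egirth ∧ ∀ v : V₂, 3 ≤ (H'.neighborSet v).ncard)) :
    SdA (coronaFam 𝒢 (joinFam ℋ ℋ')) =
      Fintype.card V * SdA ℋ + Fintype.card V * SdA ℋ' := by
  obtain ⟨B₁, hB₁, hcard₁⟩ := exists_isSimAdjBasis ℋ
  obtain ⟨B₂, hB₂, hcard₂⟩ := exists_isSimAdjBasis ℋ'
  obtain ⟨H₁, hH₁⟩ := hℋne
  obtain ⟨H₂, hH₂⟩ := hℋ'ne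
  have hne₁ : B₁.Nonempty := Set.nonempty_of_ncard_ne_zero <| by
    have := (hB₁ H₁ hH₁).three_le_ncard (by rwa [Nat.card_eq_fintype_card]); omega
  have hne₂ : B₂.Nonempty := Set.nonempty_of_ncard_ne_zero <| by
    have := (hB₂ H₂ hH₂).three_le_ncard (by rwa [Nat.card_eq_fintype_card]); omega
  rw [← mul_add]
  refine le_antisymm ?_ ?_
  · rw [← hcard₁, ← hcard₂]
    exact SdA_coronaFam_joinFam_le 𝒢 hB₁ hB₂
      (fun H hH => (hB₁ H hH).exists_not_adj hV₁ (hcond H hH))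
      (fun H hH => (hB₂ H hH).exists_not_adj hV₂ (hcond' H hH)) hne₁ hne₂
  · exact (Nat.mul_le_mul_left _ (SdA_add_SdA_le_SdA_joinFam ⟨H₁, hH₁⟩ ⟨H₂, hH₂⟩)).trans
      (card_mul_SdA_le_SdA_coronaFam h𝒢ne _)

theorem statement_15 {V V₁ V₂ : Type*} [Fintype V] [Nontrivial V] [Fintype V₁] [Fintype V₂]
    (𝒢 : Set (SimpleGraph V)) (h𝒢ne : 𝒢.Nonempty) (h𝒢 : ∀ G ∈ 𝒢, G.Connected)
    (hV₁ : 7 ≤ Fintype.card V₁) (hV₂ : 7 ≤ Fintype.card V₂)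
    (ℋ : Set (SimpleGraph V₁)) (hℋne : ℋ.Nonempty)
    (ℋ' : Set (SimpleGraph V₂)) (hℋ'ne : ℋ'.Nonempty)
    (hcond : ∀ H ∈ ℋ, Nonempty (H ≃g SimpleGraph.pathGraph (Fintype.card V₁)) ∨
      Nonempty (H ≃g SimpleGraph.cycleGraph (Fintype.card V₁)) ∨
      6 ≤ H.diam ∨ (5 ≤ H.egirth ∧ ∀ v : V₁, 3 ≤ (H.neighborSet v).ncard))
    (hcond' : ∀ H' ∈ ℋ', Nonempty (H' ≃g SimpleGraph.pathGraph (Fintype.card V₂)) ∨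
      Nonempty (H' ≃g SimpleGraph.cycleGraph (Fintype.card V₂)) ∨
      6 ≤ H'.diam ∨ (5 ≤ H'.egirth ∧ ∀ v : V₂, 3 ≤ (H'.neighborSet v).ncard)) :
    SdA (coronaFam 𝒢 (joinFam ℋ ℋ')) =
      Fintype.card V * SdA ℋ + Fintype.card V * SdA ℋ' :=
  statement_15_general 𝒢 h𝒢ne hV₁ hV₂ ℋ hℋne ℋ' hℋ'ne hcond hcond'
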